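/- Let $t \ge 2$ and let $G$ be a graph (2-uniform hypergraph) on $[n]$ that contains no matching of size $t$ and no complete subgraph on $2t-1$ vertices. Then for any vertices $i,j$, the compressed graph $\pi_{ij}(G)$ also contains no complete subgraph on $2t-1$ vertices. -/

import Mathlib

/-!
Compression only replaces edges `jb` by `ib`: edges avoiding `i` are edges of `G`, and an edge
`jb` that survives has its partner `ib` in `G` as well. Hence a `(2t-1)`-clique `S` of `π_ij(G)`
is already a clique of `G` unless `i ∈ S` and `j ∉ S`. In that case every `b ∈ S - i` is joined
in `G` to `i` or to `j`. If all are joined to `i`, `S` is a clique of `G`; if all are joined to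
`j`, so is `S - i + j`. Otherwise some `b₀` is joined to `j` but not to `i` and some `b₁` to `i`
but not to `j`, and `jb₀`, `ib₁` together with a perfect matching of the clique
`S - {i, b₀, b₁}` on `2t - 4` vertices are `t` disjoint edges of `G`.
-/

open Finset

/-- Lagrangian polynomial: sum over edges of products of weights. -/
def lagPoly (G : Finset (Finset ℕ)) (x : ℕ → ℝ) : ℝ := ∑ e ∈ G, ∏ i ∈ e, x i

/-- A feasible weight vector on `[n] = {1,…,n}`. -/
def IsFeasible (n : ℕ) (x : ℕ → ℝ) : Prop :=
  (∀ i, 0 ≤ x i) ∧ ∑ i ∈ Finset.Icc 1 n, x i = 1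

/-- Lagrangian of a hypergraph on `[n]`. -/
noncomputable def lag (n : ℕ) (G : Finset (Finset ℕ)) : ℝ :=
  sSup {v : ℝ | ∃ x : ℕ → ℝ, IsFeasible n x ∧ lagPoly G x = v}

/-- `G` is an `r`-graph on the vertex set `{1,…,n}`. -/
def IsGraphOn (n r : ℕ) (G : Finset (Finset ℕ)) : Prop :=
  ∀ e ∈ G, e ⊆ Finset.Icc 1 n ∧ e.card = r

/-- The compression `π_{ij}(G)`: each edge `f ∪ {j}` with `f` avoiding `i,j` and
`f ∪ {i} ∉ G` is replaced by `f ∪ {i}`. -/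
def compress (G : Finset (Finset ℕ)) (i j : ℕ) : Finset (Finset ℕ) :=
  (G.filter fun e => ¬(j ∈ e ∧ i ∉ e ∧ insert i (e.erase j) ∉ G)) ∪
  ((G.filter fun e => j ∈ e ∧ i ∉ e ∧ insert i (e.erase j) ∉ G).image
    fun e => insert i (e.erase j))

/-- `G` contains `t` pairwise disjoint edges. -/
def HasMatching (G : Finset (Finset ℕ)) (t : ℕ) : Prop :=
  ∃ M : Finset (Finset ℕ), M ⊆ G ∧ M.card = t ∧
    (M : Set (Finset ℕ)).Pairwise fun e f => Disjoint e f

/-- `G` contains a complete `r`-graph on `p` vertices. -/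
def HasClique (G : Finset (Finset ℕ)) (p r : ℕ) : Prop :=
  ∃ S : Finset ℕ, S.card = p ∧ ∀ e ⊆ S, e.card = r → e ∈ G

section Compress

variable {G : Finset (Finset ℕ)} {i j : ℕ} {e : Finset ℕ}

lemma mem_compress :
    e ∈ compress G i j ↔
      (e ∈ G ∧ ¬(j ∈ e ∧ i ∉ e ∧ insert i (e.erase j) ∉ G)) ∨
      ∃ f ∈ G, (j ∈ f ∧ i ∉ f ∧ insert i (f.erase j) ∉ G) ∧ insert i (f.erase j) = e := by
  simp [compress, and_assoc]

@[simp]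
lemma compress_self (i : ℕ) : compress G i i = G := by
  ext e
  simp +contextual [mem_compress]

lemma mem_of_mem_compress_of_notMem (he : e ∈ compress G i j) (hi : i ∉ e) : e ∈ G := by
  rcases mem_compress.1 he with ⟨he, -⟩ | ⟨f, -, -, rfl⟩
  · exact he
  · exact absurd (mem_insert_self i _) hi

lemma mem_of_mem_compress_of_mem (hij : i ≠ j) (he : e ∈ compress G i j) (hj : j ∈ e) :
    e ∈ G := by
  rcases mem_compress.1 he with ⟨he, -⟩ | ⟨f, -, -, rfl⟩
  · exact he
  · simp [hij.symm] at hj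

lemma insert_erase_mem_of_mem_compress (he : e ∈ compress G i j) (hj : j ∈ e) (hi : i ∉ e) :
    insert i (e.erase j) ∈ G := by
  rcases mem_compress.1 he with ⟨-, hmoved⟩ | ⟨f, -, -, rfl⟩
  · tauto
  · exact absurd (mem_insert_self i _) hi

lemma mem_or_insert_erase_mem_of_mem_compress (he : e ∈ compress G i j) :
    e ∈ G ∨ insert j (e.erase i) ∈ G := by
  rcases mem_compress.1 he with ⟨he, -⟩ | ⟨f, hf, ⟨hjf, hif, -⟩, rfl⟩
  · exact Or.inl he
  · right
    rwa [erase_insert (fun h => hif (mem_of_mem_erase h)), insert_erase hjf]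

end Compress

def pairGraph (G : Finset (Finset ℕ)) : SimpleGraph ℕ where
  Adj a b := a ≠ b ∧ {a, b} ∈ G
  symm := ⟨fun a b h => ⟨h.1.symm, pair_comm a b ▸ h.2⟩⟩
  loopless := ⟨fun _ h => h.1 rfl⟩

section PairGraph

variable {G : Finset (Finset ℕ)} {i j a b : ℕ}

lemma hasClique_two_iff {p : ℕ} : HasClique G p 2 ↔ ∃ S, (pairGraph G).IsNClique p S := by
  constructor
  · rintro ⟨S, hcard, hS⟩
    refine ⟨S, ⟨fun a ha b hb hab => ⟨hab, hS _ ?_ (card_pair hab)⟩, hcard⟩⟩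
    exact insert_subset ha (singleton_subset_iff.2 hb)
  · rintro ⟨S, hS⟩
    refine ⟨S, hS.card_eq, fun e he hcard => ?_⟩
    obtain ⟨a, b, hab, rfl⟩ := card_eq_two.1 hcard
    exact (hS.isClique (he (mem_insert_self a _)) (he (by simp)) hab).2

lemma pairGraph_adj_of_compress_adj (h : (pairGraph (compress G i j)).Adj a b)
    (ha : i ≠ a) (hb : i ≠ b) : (pairGraph G).Adj a b :=
  ⟨h.1, mem_of_mem_compress_of_notMem h.2 (by simp [ha, hb])⟩

lemma pairGraph_adj_of_compress_adj_ij (hij : i ≠ j)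
    (h : (pairGraph (compress G i j)).Adj i j) : (pairGraph G).Adj i j :=
  ⟨h.1, mem_of_mem_compress_of_mem hij h.2 (by simp)⟩

lemma pairGraph_adj_left_of_compress_adj_right (hij : i ≠ j)
    (h : (pairGraph (compress G i j)).Adj j b) (hb : i ≠ b) : (pairGraph G).Adj i b := by
  refine ⟨hb, ?_⟩
  simpa [erase_insert_of_ne h.1.symm, h.1] using
    insert_erase_mem_of_mem_compress h.2 (mem_insert_self j _) (by simp [hij, hb])

lemma pairGraph_adj_or_of_compress_adj_left (h : (pairGraph (compress G i j)).Adj i b)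
    (hj : j ≠ b) : (pairGraph G).Adj i b ∨ (pairGraph G).Adj j b := by
  have hib : i ∉ ({b} : Finset ℕ) := by simpa using h.1
  rcases mem_or_insert_erase_mem_of_mem_compress h.2 with hG | hG
  · exact Or.inl ⟨h.1, hG⟩
  · exact Or.inr ⟨hj, by rwa [erase_insert hib] at hG⟩

end PairGraph

def HasMatchingIn (G : Finset (Finset ℕ)) (k : ℕ) (V : Finset ℕ) : Prop :=
  ∃ M ⊆ G, M.card = k ∧ (M : Set (Finset ℕ)).Pairwise (fun e f => Disjoint e f) ∧
    ∀ e ∈ M, e ⊆ V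

section Matching

variable {G : Finset (Finset ℕ)} {k : ℕ} {V e : Finset ℕ}

lemma HasMatchingIn.hasMatching (h : HasMatchingIn G k V) : HasMatching G k :=
  let ⟨M, hMG, hcard, hdisj, _⟩ := h
  ⟨M, hMG, hcard, hdisj⟩

lemma HasMatchingIn.union_edge (h : HasMatchingIn G k V) (he : e ∈ G) (hne : e.Nonempty)
    (hdisj : Disjoint e V) : HasMatchingIn G (k + 1) (e ∪ V) := by
  obtain ⟨M, hMG, hcard, hMdisj, hMV⟩ := h
  have hdisjM : ∀ f ∈ M, Disjoint e f := fun f hf => hdisj.mono_right (hMV f hf)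
  have heM : e ∉ M := fun heM => hne.ne_empty (disjoint_self.1 (hdisjM e heM))
  refine ⟨insert e M, insert_subset he hMG, by rw [card_insert_of_notMem heM, hcard], ?_, ?_⟩
  · rw [coe_insert]
    exact hMdisj.insert fun f hf _ => ⟨hdisjM f hf, (hdisjM f hf).symm⟩
  · rintro f hf
    rcases mem_insert.1 hf with rfl | hf
    · exact subset_union_left
    · exact (hMV f hf).trans subset_union_right

lemma hasMatchingIn_of_isClique (hV : (pairGraph G).IsClique V) (hk : 2 * k ≤ V.card) :
    HasMatchingIn G k V := by
  induction k generalizing V with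
  | zero => exact ⟨∅, empty_subset _, rfl, by simp, by simp⟩
  | succ k ih =>
    obtain ⟨a, ha, b, hb, hab⟩ := one_lt_card.1 (by omega : 1 < V.card)
    have hsub : {a, b} ⊆ V := insert_subset ha (singleton_subset_iff.2 hb)
    have hrest : HasMatchingIn G k (V \ {a, b}) := by
      refine ih (hV.subset (by simp)) ?_
      rw [card_sdiff_of_subset hsub, card_pair hab]
      omega
    simpa [union_sdiff_of_subset hsub] using
      hrest.union_edge (hV ha hb hab).2 (insert_nonempty a _) disjoint_sdiff

lemma hasMatching_of_isClique_of_adj {S : Finset ℕ} {i j b₀ b₁ : ℕ}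
    (hS : (pairGraph G).IsClique S) (hij : i ≠ j) (hiS : i ∉ S) (hjS : j ∉ S)
    (hb₀ : b₀ ∈ S) (hb₁ : b₁ ∈ S) (hb : b₀ ≠ b₁)
    (h₀ : (pairGraph G).Adj j b₀) (h₁ : (pairGraph G).Adj i b₁) :
    HasMatching G ((S.card - 2) / 2 + 1 + 1) := by
  have hsub : {b₀, b₁} ⊆ S := insert_subset hb₀ (singleton_subset_iff.2 hb₁)
  have hrest : HasMatchingIn G ((S.card - 2) / 2) (S \ {b₀, b₁}) := by
    refine hasMatchingIn_of_isClique (hS.subset (by simp)) ?_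
    rw [card_sdiff_of_subset hsub, card_pair hb]
    omega
  have hj := hrest.union_edge h₀.2 (insert_nonempty _ _) (by
    simp [disjoint_insert_left, hjS])
  refine (hj.union_edge h₁.2 (insert_nonempty _ _) ?_).hasMatching
  have hjb₁ : j ≠ b₁ := (ne_of_mem_of_not_mem hb₁ hjS).symm
  have hb₀i : b₀ ≠ i := ne_of_mem_of_not_mem hb₀ hiS
  simp [disjoint_insert_left, hiS, hb₁, hij.symm, hjb₁, hb₀i, hb]

end Matching

section CompressClique

variable {G : Finset (Finset ℕ)} {i j p : ℕ} {S : Finset ℕ}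

lemma isClique_of_isClique_compress_of_notMem (hS : (pairGraph (compress G i j)).IsClique S)
    (hi : i ∉ S) : (pairGraph G).IsClique S := fun _ ha _ hb hab =>
  pairGraph_adj_of_compress_adj (hS ha hb hab) (ne_of_mem_of_not_mem ha hi).symm
    (ne_of_mem_of_not_mem hb hi).symm

lemma isClique_of_isClique_compress_of_mem_of_mem (hij : i ≠ j)
    (hS : (pairGraph (compress G i j)).IsClique S) (hi : i ∈ S) (hj : j ∈ S) :
    (pairGraph G).IsClique S := by
  rw [← insert_erase hi, coe_insert, SimpleGraph.isClique_insert]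
  refine ⟨isClique_of_isClique_compress_of_notMem (hS.subset (by simp)) (notMem_erase i S),
    fun b hb hib => ?_⟩
  by_cases hbj : b = j
  · subst hbj
    exact pairGraph_adj_of_compress_adj_ij hij (hS hi hj hij)
  · exact pairGraph_adj_left_of_compress_adj_right hij
      (hS hj (mem_of_mem_erase hb) (Ne.symm hbj)) hib

lemma exists_isNClique_or_hasMatching_of_isNClique_compress
    (hS : (pairGraph (compress G i j)).IsNClique p S) (hi : i ∈ S) (hj : j ∉ S) :
    (∃ S, (pairGraph G).IsNClique p S) ∨ HasMatching G ((p + 1) / 2) := by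
  set S' := S.erase i
  have hiS' : i ∉ S' := notMem_erase i S
  have hjS' : j ∉ S' := fun h => hj (mem_of_mem_erase h)
  have hcard : S'.card + 1 = p := (card_erase_add_one hi).trans hS.card_eq
  have hS' : (pairGraph G).IsClique S' :=
    isClique_of_isClique_compress_of_notMem (hS.isClique.subset (by simp [S'])) hiS'
  have hadj : ∀ b ∈ S', (pairGraph G).Adj i b ∨ (pairGraph G).Adj j b := fun b hb =>
    pairGraph_adj_or_of_compress_adj_left
      (hS.isClique hi (mem_of_mem_erase hb) (ne_of_mem_erase hb).symm)
      (ne_of_mem_of_not_mem hb hjS').symm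
  by_cases hall_i : ∀ b ∈ S', (pairGraph G).Adj i b
  · refine Or.inl ⟨insert i S', ?_, by rw [card_insert_of_notMem hiS', hcard]⟩
    rw [coe_insert, SimpleGraph.isClique_insert]
    exact ⟨hS', fun b hb _ => hall_i b hb⟩
  by_cases hall_j : ∀ b ∈ S', (pairGraph G).Adj j b
  · refine Or.inl ⟨insert j S', ?_, by rw [card_insert_of_notMem hjS', hcard]⟩
    rw [coe_insert, SimpleGraph.isClique_insert]
    exact ⟨hS', fun b hb _ => hall_j b hb⟩
  obtain ⟨b₀, hb₀, hib₀⟩ := not_forall₂.1 hall_i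
  obtain ⟨b₁, hb₁, hjb₁⟩ := not_forall₂.1 hall_j
  have hb : b₀ ≠ b₁ := by
    rintro rfl
    exact (hadj b₀ hb₀).elim hib₀ hjb₁
  have hmatch := hasMatching_of_isClique_of_adj hS' (ne_of_mem_of_not_mem hi hj) hiS' hjS'
    hb₀ hb₁ hb ((hadj b₀ hb₀).resolve_left hib₀) ((hadj b₁ hb₁).resolve_right hjb₁)
  have h2 : 1 < S'.card := one_lt_card.2 ⟨b₀, hb₀, b₁, hb₁, hb⟩
  exact Or.inr (by rwa [show (S'.card - 2) / 2 + 1 + 1 = (p + 1) / 2 by omega] at hmatch)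

end CompressClique

theorem compression_preserves_clique_free_graphs_general (t : ℕ)
    (G : Finset (Finset ℕ))
    (hM : ¬HasMatching G t) (hK : ¬HasClique G (2*t - 1) 2)
    (i j : ℕ) :
    ¬HasClique (compress G i j) (2*t - 1) 2 := by
  rw [hasClique_two_iff] at hK ⊢
  rintro ⟨S, hS⟩
  by_cases hij : i = j
  · subst hij
    rw [compress_self] at hS
    exact hK ⟨S, hS⟩
  by_cases hi : i ∈ S
  swap
  · exact hK ⟨S, isClique_of_isClique_compress_of_notMem hS.isClique hi, hS.card_eq⟩
  by_cases hj : j ∈ S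
  · exact hK ⟨S, isClique_of_isClique_compress_of_mem_of_mem hij hS.isClique hi hj, hS.card_eq⟩
  rcases exists_isNClique_or_hasMatching_of_isNClique_compress hS hi hj with hclique | hmatch
  · exact hK hclique
  · exact hM (by rwa [show (2 * t - 1 + 1) / 2 = t by omega] at hmatch)

theorem compression_preserves_clique_free_graphs (n t : ℕ) (ht : 2 ≤ t)
    (G : Finset (Finset ℕ)) (hG : IsGraphOn n 2 G)
    (hM : ¬HasMatching G t) (hK : ¬HasClique G (2*t - 1) 2)
    (i j : ℕ) :
    ¬HasClique (compress G i j) (2*t - 1) 2 :=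
  compression_preserves_clique_free_graphs_general t G hM hK i j
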